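/- Let k be a field of characteristic zero and n ≥ 1. There is a unique k-algebra homomorphism ι* : Aₙ → Aₙ with ι*(a₀) = 0, ι*(a_i) = a_{i−1} for all i ≥ 1, ι*(b₁) = b₁ + 1, and ι*(b_j) = b_j for 2 ≤ j ≤ n (in particular these assignments respect the defining relations of Aₙ). Moreover ι* is surjective and its kernel is the principal ideal a₀·Aₙ. (This expresses that the shift map ι : Z^{≤n} → Z^{≤n}, (L, ∇, s) ↦ (L(1), ∇, s), is a closed embedding, cut out by the single equation a₀ = 0, and hence is almost finitely presented, as in Proposition 2.20(3) and Corollary 2.23.) -/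

import Mathlib

open MvPolynomial

/-- The variable `a_l` for `l : ℤ`, with the convention `a_l = 0` for `l < 0`.
Here `a_i = X (Sum.inl i)`, and the variable `b_j` (for `1 ≤ j ≤ n`) is
`X (Sum.inr ⟨j−1⟩)`. -/
noncomputable def aVar (k : Type) [Field k] (n : ℕ) (l : ℤ) :
    MvPolynomial (ℕ ⊕ Fin n) k :=
  if 0 ≤ l then X (Sum.inl l.toNat) else 0

/-- The relation `r_m = ∑_{j=1}^{n} a_{m+j} b_j − (m+1) a_{m+1}` (with `a_l = 0` for
`l < 0`), for `m : ℤ`, `m ≥ −n`: equating coefficients of `t^m dt` in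
`∑ i a_i t^{i−1} dt = (∑ a_i t^i)·(∑_{j=1}^n b_j t^{−j} dt)`. -/
noncomputable def relA (k : Type) [Field k] (n : ℕ) (m : ℤ) :
    MvPolynomial (ℕ ⊕ Fin n) k :=
  (∑ j : Fin n, aVar k n (m + (j.1 + 1)) * X (Sum.inr j)) - (m + 1) • aVar k n (m + 1)

/-- `Aₙ`: the commutative `k`-algebra with generators `a₀, a₁, …` and `b₁, …, bₙ` and
relations `r_m = 0` for all integers `m ≥ −n`. -/
noncomputable abbrev AAlg (k : Type) [Field k] (n : ℕ) : Type :=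
  MvPolynomial (ℕ ⊕ Fin n) k ⧸
    Ideal.span (Set.range fun m : {m : ℤ // -(n : ℤ) ≤ m} => relA k n m.1)

/-- The generator `a_i` of `Aₙ`. -/
noncomputable def aA (k : Type) [Field k] (n : ℕ) (i : ℕ) : AAlg k n :=
  Ideal.Quotient.mk _ (X (Sum.inl i))

/-- The generator `b_{j+1}` of `Aₙ` (for `j : Fin n`). -/
noncomputable def bA (k : Type) [Field k] (n : ℕ) (j : Fin n) : AAlg k n :=
  Ideal.Quotient.mk _ (X (Sum.inr j))

/-! The endomorphism `ι*` is induced by the substitution `shift : a_i ↦ a_{i-1}, b₁ ↦ b₁ + 1` of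
the polynomial ring, which sends `r_m` to `r_{m-1}`. It is surjective because `shift` has the right
inverse `unshift : a_i ↦ a_{i+1}, b₁ ↦ b₁ - 1`. The same computation shows that `unshift` sends
`r_m` to `r_{m+1}` modulo `a₀`, so it descends to a map `Aₙ → Aₙ/(a₀)` whose composite with `ι*`
is the quotient map; hence `ker ι* ⊆ (a₀)`, and `ι*(a₀) = 0` gives the other inclusion. -/

theorem AlgHom.ker_eq_of_comp_eq_mkₐ {R A B : Type*} [CommSemiring R] [CommRing A] [Ring B]
    [Algebra R A] [Algebra R B] {I : Ideal A} (f : A →ₐ[R] B) (g : B →ₐ[R] A ⧸ I)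
    (hgf : g.comp f = Ideal.Quotient.mkₐ R I) (hI : I ≤ RingHom.ker f) :
    RingHom.ker f = I := by
  refine le_antisymm (fun x hx => ?_) hI
  rw [← Ideal.Quotient.eq_zero_iff_mem, ← Ideal.Quotient.mkₐ_eq_mk R, ← hgf,
    AlgHom.comp_apply, (RingHom.mem_ker).1 hx, map_zero]

namespace AAlg

variable (k : Type) [Field k] (n : ℕ)

noncomputable abbrev relIdeal : Ideal (MvPolynomial (ℕ ⊕ Fin n) k) :=
  Ideal.span (Set.range fun m : {m : ℤ // -(n : ℤ) ≤ m} => relA k n m.1)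

theorem relA_mem_relIdeal (m : ℤ) : relA k n m ∈ relIdeal k n := by
  by_cases hm : -(n : ℤ) ≤ m
  · exact Ideal.subset_span ⟨⟨m, hm⟩, rfl⟩
  · have hzero : relA k n m = 0 := by
      have hsmul : (m + 1) • aVar k n (m + 1) = 0 := by
        obtain h | h : m + 1 < 0 ∨ m + 1 = 0 := by omega
        · rw [aVar, if_neg (by omega), smul_zero]
        · rw [h, zero_smul]
      rw [relA, hsmul, sub_zero]
      exact Finset.sum_eq_zero fun j _ => by
        rw [aVar, if_neg (by have := j.2; omega), zero_mul]
    exact hzero ▸ zero_mem _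

/-- The term `-s • a_{m+s+1}` contributed by `b₁` turns the coefficient `m + 1` of `r_m` into the
coefficient `m + s + 1` of `r_{m+s}`. -/
theorem map_relA_of_shift {B : Type*} [CommRing B] [Algebra k B] (hn : 1 ≤ n)
    (F G : MvPolynomial (ℕ ⊕ Fin n) k →ₐ[k] B) (s : ℤ)
    (ha : ∀ l, F (aVar k n l) = G (aVar k n (l + s)))
    (hb₀ : F (X (.inr ⟨0, hn⟩)) = G (X (.inr ⟨0, hn⟩)) - s)
    (hb : ∀ j : Fin n, (j : ℕ) ≠ 0 → F (X (.inr j)) = G (X (.inr j)))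
    (m : ℤ) : F (relA k n m) = G (relA k n (m + s)) := by
  have hb' : ∀ j, F (X (.inr j)) = G (X (.inr j)) - if j = ⟨0, hn⟩ then (s : B) else 0 := by
    intro j
    split_ifs with hj
    · exact hj ▸ hb₀
    · rw [hb j (fun h => hj (Fin.ext h)), sub_zero]
  simp only [relA, map_sub, map_sum, map_mul, map_zsmul, ha, hb', mul_sub,
    Finset.sum_sub_distrib, mul_ite, mul_zero, add_right_comm m _ s]
  rw [Finset.sum_ite_eq', if_pos (Finset.mem_univ _), zsmul_eq_mul, zsmul_eq_mul]
  push_cast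
  ring

theorem relIdeal_le_ker_of_shift {B : Type*} [CommRing B] [Algebra k B] (hn : 1 ≤ n)
    (F G : MvPolynomial (ℕ ⊕ Fin n) k →ₐ[k] B) (s : ℤ)
    (ha : ∀ l, F (aVar k n l) = G (aVar k n (l + s)))
    (hb₀ : F (X (.inr ⟨0, hn⟩)) = G (X (.inr ⟨0, hn⟩)) - s)
    (hb : ∀ j : Fin n, (j : ℕ) ≠ 0 → F (X (.inr j)) = G (X (.inr j)))
    (hG : relIdeal k n ≤ RingHom.ker G) : relIdeal k n ≤ RingHom.ker F := by
  refine Ideal.span_le.2 ?_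
  rintro _ ⟨m, rfl⟩
  change F (relA k n m) = 0
  rw [map_relA_of_shift k n hn F G s ha hb₀ hb]
  exact hG (relA_mem_relIdeal k n _)

theorem algHom_ext {B : Type*} [Semiring B] [Algebra k B] {f g : AAlg k n →ₐ[k] B}
    (ha : ∀ i, f (aA k n i) = g (aA k n i)) (hb : ∀ j, f (bA k n j) = g (bA k n j)) :
    f = g :=
  Ideal.Quotient.algHom_ext _ (MvPolynomial.algHom_ext fun | .inl i => ha i | .inr j => hb j)

noncomputable def shift : MvPolynomial (ℕ ⊕ Fin n) k →ₐ[k] MvPolynomial (ℕ ⊕ Fin n) k :=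
  aeval fun
    | .inl 0 => 0
    | .inl (i + 1) => X (.inl i)
    | .inr j => X (.inr j) + if (j : ℕ) = 0 then 1 else 0

noncomputable def unshift : MvPolynomial (ℕ ⊕ Fin n) k →ₐ[k] MvPolynomial (ℕ ⊕ Fin n) k :=
  aeval fun
    | .inl i => X (.inl (i + 1))
    | .inr j => X (.inr j) - if (j : ℕ) = 0 then 1 else 0

theorem shift_aVar (l : ℤ) : shift k n (aVar k n l) = aVar k n (l - 1) := by
  rcases lt_trichotomy l 0 with h | rfl | h
  · rw [aVar, aVar, if_neg (by omega), if_neg (by omega), map_zero]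
  · simp [aVar, shift]
  · rw [aVar, aVar, if_pos h.le, if_pos (by omega), show l.toNat = (l - 1).toNat + 1 by omega]
    simp [shift]

theorem unshift_aVar (l : ℤ) :
    unshift k n (aVar k n l) = aVar k n (l + 1) - if l = -1 then X (.inl 0) else 0 := by
  rcases lt_trichotomy l (-1) with h | rfl | h
  · rw [aVar, aVar, if_neg (by omega), if_neg (by omega), if_neg h.ne, map_zero, sub_zero]
  · simp [aVar]
  · rw [aVar, aVar, if_pos (by omega), if_pos (by omega), if_neg h.ne',
      show (l + 1).toNat = l.toNat + 1 by omega]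
    simp [unshift]

theorem shift_comp_unshift : (shift k n).comp (unshift k n) = AlgHom.id k _ := by
  refine MvPolynomial.algHom_ext fun
    | .inl i => by simp [shift, unshift]
    | .inr j => by simp [shift, unshift]

noncomputable def shiftHom (hn : 1 ≤ n) : AAlg k n →ₐ[k] AAlg k n :=
  Ideal.Quotient.liftₐ _ ((Ideal.Quotient.mkₐ k _).comp (shift k n)) fun _ hp =>
    relIdeal_le_ker_of_shift k n hn ((Ideal.Quotient.mkₐ k _).comp (shift k n))
      (Ideal.Quotient.mkₐ k _) (-1)
      (fun l => by simp [shift_aVar, sub_eq_add_neg])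
      (by simp [shift])
      (fun j hj => by simp [shift, hj])
      (Ideal.Quotient.mkₐ_ker k _).ge hp

theorem shiftHom_mk (hn : 1 ≤ n) (p : MvPolynomial (ℕ ⊕ Fin n) k) :
    shiftHom k n hn (Ideal.Quotient.mk _ p) = Ideal.Quotient.mk _ (shift k n p) :=
  rfl

theorem shiftHom_aA_zero (hn : 1 ≤ n) : shiftHom k n hn (aA k n 0) = 0 := by
  simp [aA, shiftHom_mk, shift]

theorem shiftHom_aA_succ (hn : 1 ≤ n) (i : ℕ) : shiftHom k n hn (aA k n (i + 1)) = aA k n i := by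
  simp [aA, shiftHom_mk, shift]

theorem shiftHom_bA (hn : 1 ≤ n) (j : Fin n) :
    shiftHom k n hn (bA k n j) = bA k n j + if (j : ℕ) = 0 then 1 else 0 := by
  simp [bA, shiftHom_mk, shift, apply_ite (Ideal.Quotient.mk _)]

theorem shiftHom_surjective (hn : 1 ≤ n) : Function.Surjective (shiftHom k n hn) := by
  intro x
  obtain ⟨p, rfl⟩ := Ideal.Quotient.mk_surjective x
  refine ⟨Ideal.Quotient.mk _ (unshift k n p), ?_⟩
  rw [shiftHom_mk, ← AlgHom.comp_apply, shift_comp_unshift, AlgHom.id_apply]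

theorem mk_aA_zero : Ideal.Quotient.mk (Ideal.span {aA k n 0}) (aA k n 0) = 0 :=
  Ideal.Quotient.eq_zero_iff_mem.2 (Ideal.mem_span_singleton_self _)

noncomputable def mkQuotA0 : MvPolynomial (ℕ ⊕ Fin n) k →ₐ[k] AAlg k n ⧸ Ideal.span {aA k n 0} :=
  (Ideal.Quotient.mkₐ k _).comp (Ideal.Quotient.mkₐ k _)

theorem mkQuotA0_apply (p : MvPolynomial (ℕ ⊕ Fin n) k) :
    mkQuotA0 k n p = Ideal.Quotient.mk _ (Ideal.Quotient.mk _ p) :=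
  rfl

/-- `unshift (a_{-1}) = 0` differs from `a₀`, so the relations hold only modulo `a₀`. -/
noncomputable def unshiftHom (hn : 1 ≤ n) : AAlg k n →ₐ[k] AAlg k n ⧸ Ideal.span {aA k n 0} :=
  Ideal.Quotient.liftₐ _ ((mkQuotA0 k n).comp (unshift k n)) fun p hp => by
    refine relIdeal_le_ker_of_shift (B := AAlg k n ⧸ Ideal.span {aA k n 0}) k n hn _
      (mkQuotA0 k n) 1 (fun l => ?_) ?_ (fun j hj => ?_)
      (fun q hq => ?_) hp
    · rw [AlgHom.comp_apply, unshift_aVar, map_sub, sub_eq_self]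
      split_ifs
      · exact mk_aA_zero k n
      · exact map_zero _
    · simp [unshift]
    · simp [unshift, hj]
    · simp [mkQuotA0_apply, Ideal.Quotient.eq_zero_iff_mem.2 hq]

theorem unshiftHom_mk (hn : 1 ≤ n) (p : MvPolynomial (ℕ ⊕ Fin n) k) :
    unshiftHom k n hn (Ideal.Quotient.mk _ p) = mkQuotA0 k n (unshift k n p) :=
  rfl

theorem unshiftHom_aA (hn : 1 ≤ n) (i : ℕ) :
    unshiftHom k n hn (aA k n i) = Ideal.Quotient.mk _ (aA k n (i + 1)) := by
  refine (unshiftHom_mk k n hn (X (.inl i))).trans ?_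
  simp only [unshift, aeval_X]
  rfl

theorem unshiftHom_bA (hn : 1 ≤ n) (j : Fin n) :
    unshiftHom k n hn (bA k n j) =
      Ideal.Quotient.mk _ (bA k n j) - if (j : ℕ) = 0 then 1 else 0 := by
  refine (unshiftHom_mk k n hn (X (.inr j))).trans ?_
  simp only [unshift, aeval_X, map_sub, apply_ite (mkQuotA0 k n), map_one, map_zero]
  rfl

theorem unshiftHom_comp_shiftHom (hn : 1 ≤ n) :
    (unshiftHom k n hn).comp (shiftHom k n hn) = Ideal.Quotient.mkₐ k _ := by
  refine algHom_ext k n (fun i => ?_) (fun j => ?_) <;>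
    rw [AlgHom.comp_apply, Ideal.Quotient.mkₐ_eq_mk]
  · cases i with
    | zero => rw [shiftHom_aA_zero, map_zero, mk_aA_zero]
    | succ i => rw [shiftHom_aA_succ, unshiftHom_aA]
  · rw [shiftHom_bA, map_add, unshiftHom_bA, apply_ite (unshiftHom k n hn), map_one, map_zero,
      sub_add_cancel]

theorem shiftHom_ker (hn : 1 ≤ n) :
    RingHom.ker (shiftHom k n hn) = Ideal.span {aA k n 0} :=
  AlgHom.ker_eq_of_comp_eq_mkₐ _ _ (unshiftHom_comp_shiftHom k n hn) <| by
    rw [Ideal.span_le, Set.singleton_subset_iff, SetLike.mem_coe, RingHom.mem_ker]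
    exact shiftHom_aA_zero k n hn

end AAlg

/-- there is a unique `k`-algebra homomorphism `ι* : Aₙ → Aₙ` with
`ι*(a₀) = 0`, `ι*(a_i) = a_{i−1}` for `i ≥ 1`, `ι*(b₁) = b₁ + 1` and `ι*(b_j) = b_j` for
`2 ≤ j ≤ n`; moreover it is surjective with kernel the principal ideal `a₀·Aₙ`. -/
theorem aAlg_shift_hom (k : Type) [Field k] (n : ℕ) (hn : 1 ≤ n) :
    ∃ ι : AAlg k n →ₐ[k] AAlg k n,
      (ι (aA k n 0) = 0 ∧
        (∀ i : ℕ, ι (aA k n (i + 1)) = aA k n i) ∧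
        ι (bA k n ⟨0, by omega⟩) = bA k n ⟨0, by omega⟩ + 1 ∧
        (∀ j : Fin n, 1 ≤ j.1 → ι (bA k n j) = bA k n j)) ∧
      (∀ ι' : AAlg k n →ₐ[k] AAlg k n,
        (ι' (aA k n 0) = 0 ∧
          (∀ i : ℕ, ι' (aA k n (i + 1)) = aA k n i) ∧
          ι' (bA k n ⟨0, by omega⟩) = bA k n ⟨0, by omega⟩ + 1 ∧
          (∀ j : Fin n, 1 ≤ j.1 → ι' (bA k n j) = bA k n j)) → ι' = ι) ∧
      Function.Surjective ι ∧
      RingHom.ker (ι : AAlg k n →+* AAlg k n) = Ideal.span {aA k n 0} := by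
  refine ⟨AAlg.shiftHom k n hn, ⟨AAlg.shiftHom_aA_zero k n hn, AAlg.shiftHom_aA_succ k n hn, ?_,
    fun j hj => ?_⟩, ?_, AAlg.shiftHom_surjective k n hn, AAlg.shiftHom_ker k n hn⟩
  · rw [AAlg.shiftHom_bA, if_pos rfl]
  · rw [AAlg.shiftHom_bA, if_neg (by omega), add_zero]
  rintro ι ⟨h0, hsucc, hb0, hb⟩
  refine AAlg.algHom_ext k n (fun i => ?_) (fun j => ?_)
  · cases i with
    | zero => rw [h0, AAlg.shiftHom_aA_zero]
    | succ i => rw [hsucc, AAlg.shiftHom_aA_succ]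
  · rw [AAlg.shiftHom_bA]
    split_ifs with hj
    · obtain rfl : j = ⟨0, hn⟩ := Fin.ext hj
      exact hb0
    · rw [add_zero, hb j (by omega)]
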